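/- With double exponential slab and noise variance σ², the posterior median satisfies δ(c;w,b,c) − c → 0 as c → +∞: there is asymptotically no shrinkage at the data-driven location c. -/

import Mathlib

open MeasureTheory Real

/-- Normal density with mean `0` and standard deviation `σ`. -/
noncomputable def phiS (σ x : ℝ) : ℝ :=
  (σ * Real.sqrt (2 * Real.pi))⁻¹ * Real.exp (-x ^ 2 / (2 * σ ^ 2))

/-- Double exponential slab `γ(μ;b,c) = (b/2) e^{−b|μ−c|}`. -/
noncomputable def deSlab (b c μ : ℝ) : ℝ := b / 2 * Real.exp (-b * |μ - c|)

/-- Convolution `g(x;b,c)` of the noise density `φ_{0,σ²}` with the slab. -/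
noncomputable def gS (σ b c x : ℝ) : ℝ := ∫ μ : ℝ, phiS σ (x - μ) * deSlab b c μ

/-- Marginal density `m(x;w,b,c) = (1−w)φ_{0,σ²}(x) + w g(x;b,c)`. -/
noncomputable def mS (σ w b c x : ℝ) : ℝ := (1 - w) * phiS σ x + w * gS σ b c x

/-- Posterior CDF of `μ` given `X = x` under the spike-and-slab prior
`(1−w)δ₀ + w·(b/2)e^{−b|μ−c|}` and likelihood `X | μ ∼ N(μ,σ²)`. -/
noncomputable def postCDFS (σ w b c x t : ℝ) : ℝ :=
  ((1 - w) * phiS σ x * (if (0:ℝ) ≤ t then 1 else 0)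
    + w * ∫ μ in Set.Iic t, phiS σ (x - μ) * deSlab b c μ) / mS σ w b c x

/-- Posterior median `δ(x;w,b,c)`. -/
noncomputable def deltaS (σ w b c x : ℝ) : ℝ :=
  sInf {t : ℝ | 1 / 2 ≤ postCDFS σ w b c x t}

/-!
At `x = c` the substitution `μ = c + s` shows that the posterior of `μ - c` mixes an atom at `-c`,
of weight proportional to `(1 - w) φ(c)`, with the fixed density proportional to
`f(s) = φ(s) (b/2) e^{-b|s|}`. Since `φ(c) → 0`, the posterior CDF of `μ - c` at `u` tends to
`∫_{-∞}^u f / ∫ f`, which is strictly increasing and equals `1/2` at `u = 0` because `f` is even and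
positive. Hence for every `ε > 0` the posterior CDF is eventually below `1/2` at `c - ε` and above
`1/2` at `c + ε`, which traps the median in `[c - ε, c + ε]`.
-/

open MeasureTheory Set Filter Topology

lemma csInf_setOf_le_mem_Icc {α β : Type*} [ConditionallyCompleteLinearOrder α] [Preorder β]
    {F : α → β} (hF : Monotone F) {q : β} {a b : α} (ha : F a < q) (hb : q ≤ F b) :
    sInf {t | q ≤ F t} ∈ Icc a b := by
  have hlower : a ∈ lowerBounds {t | q ≤ F t} := fun t ht =>
    le_of_not_gt fun hta => (ha.trans_le ht).not_ge (hF hta.le)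
  exact ⟨le_csInf ⟨b, hb⟩ hlower, csInf_le ⟨a, hlower⟩ hb⟩

lemma setIntegral_Iic_strictMono {f : ℝ → ℝ} (hf : Integrable f) (hpos : ∀ x, 0 < f x) :
    StrictMono fun t => ∫ x in Iic t, f x := by
  intro u v huv
  have hsplit : ∫ x in Iic v, f x = (∫ x in Iic u, f x) + ∫ x in Ioc u v, f x := by
    rw [← Iic_union_Ioc_eq_Iic huv.le]
    exact setIntegral_union (Iic_disjoint_Ioc le_rfl) measurableSet_Ioc
      hf.integrableOn hf.integrableOn
  have hIoc : 0 < ∫ x in Ioc u v, f x := by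
    rw [← intervalIntegral.integral_of_le huv.le]
    exact intervalIntegral.intervalIntegral_pos_of_pos_on hf.intervalIntegrable
      (fun x _ => hpos x) huv
  simp only [hsplit]
  linarith

lemma integral_eq_two_mul_setIntegral_Iic_zero {f : ℝ → ℝ} (heven : ∀ x, f (-x) = f x) :
    ∫ x, f x = 2 * ∫ x in Iic 0, f x := by
  have habs : ∀ x, f |x| = f x := fun x => by
    rcases abs_choice x with h | h <;> rw [h]
    exact heven x
  calc ∫ x, f x = ∫ x, f |x| := by simp_rw [habs]
    _ = 2 * ∫ x in Ioi 0, f x := integral_comp_abs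
    _ = 2 * ∫ x in Iic 0, f (-x) := by rw [integral_comp_neg_Iic, neg_zero]
    _ = 2 * ∫ x in Iic 0, f x := by simp_rw [heven]

lemma setIntegral_Iic_comp_sub_right (f : ℝ → ℝ) (t c : ℝ) :
    ∫ x in Iic t, f (x - c) = ∫ x in Iic (t - c), f x := by
  have h := (measurePreserving_sub_right volume c).setIntegral_preimage_emb
    (measurableEmbedding_subRight c) f (Iic (t - c))
  rwa [preimage_sub_const_Iic, sub_add_cancel] at h

lemma phiS_pos {σ : ℝ} (hσ : 0 < σ) (x : ℝ) : 0 < phiS σ x := by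
  unfold phiS
  positivity

lemma integrable_phiS {σ : ℝ} (hσ : 0 < σ) : Integrable (phiS σ) := by
  have h := (integrable_exp_neg_mul_sq (b := 1 / (2 * σ ^ 2)) (by positivity)).const_mul
    (σ * Real.sqrt (2 * Real.pi))⁻¹
  refine h.congr (ae_of_all _ fun x => ?_)
  simp only [phiS]
  ring_nf

lemma tendsto_phiS_atTop {σ : ℝ} (hσ : 0 < σ) : Tendsto (phiS σ) atTop (𝓝 0) := by
  have hexponent : Tendsto (fun x : ℝ => -x ^ 2 / (2 * σ ^ 2)) atTop atBot := by
    simp only [neg_div]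
    exact tendsto_neg_atTop_atBot.comp
      ((tendsto_pow_atTop two_ne_zero).atTop_div_const (by positivity))
  have h := (Real.tendsto_exp_atBot.comp hexponent).const_mul (σ * Real.sqrt (2 * Real.pi))⁻¹
  rw [mul_zero] at h
  exact h

noncomputable def slabIntegrand (σ b s : ℝ) : ℝ := phiS σ s * deSlab b 0 s

noncomputable def slabMass (σ b t : ℝ) : ℝ := ∫ s in Iic t, slabIntegrand σ b s

section Slab

variable {σ b : ℝ}

lemma slabIntegrand_pos (hσ : 0 < σ) (hb : 0 < b) (s : ℝ) : 0 < slabIntegrand σ b s :=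
  mul_pos (phiS_pos hσ s) (by unfold deSlab; positivity)

lemma slabIntegrand_neg (σ b s : ℝ) : slabIntegrand σ b (-s) = slabIntegrand σ b s := by
  simp [slabIntegrand, phiS, deSlab, abs_neg]

lemma integrable_slabIntegrand (hσ : 0 < σ) (hb : 0 ≤ b) : Integrable (slabIntegrand σ b) := by
  have hcont : Continuous (deSlab b 0) := by unfold deSlab; fun_prop
  refine (integrable_phiS hσ).mul_bdd (c := b / 2) hcont.aestronglyMeasurable
    (ae_of_all _ fun s => ?_)
  have hexp : Real.exp (-b * |s - 0|) ≤ 1 :=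
    Real.exp_le_one_iff.2 (by nlinarith [abs_nonneg (s - 0)])
  rw [Real.norm_eq_abs, deSlab, abs_of_nonneg (by positivity)]
  nlinarith

lemma slabMass_strictMono (hσ : 0 < σ) (hb : 0 < b) : StrictMono (slabMass σ b) :=
  setIntegral_Iic_strictMono (integrable_slabIntegrand hσ hb.le) (slabIntegrand_pos hσ hb)

lemma slabMass_pos (hσ : 0 < σ) (hb : 0 < b) (t : ℝ) : 0 < slabMass σ b t :=
  calc 0 ≤ slabMass σ b (t - 1) :=
        setIntegral_nonneg measurableSet_Iic fun s _ => (slabIntegrand_pos hσ hb s).le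
    _ < slabMass σ b t := slabMass_strictMono hσ hb (by linarith)

lemma phiS_sub_mul_deSlab (σ b c μ : ℝ) :
    phiS σ (c - μ) * deSlab b c μ = slabIntegrand σ b (μ - c) := by
  rw [slabIntegrand, phiS, phiS, deSlab, deSlab, sub_zero, ← neg_sub μ c, neg_sq]

lemma gS_self (σ b c : ℝ) : gS σ b c c = 2 * slabMass σ b 0 := by
  simp_rw [gS, phiS_sub_mul_deSlab, integral_sub_right_eq_self (slabIntegrand σ b) c]
  exact integral_eq_two_mul_setIntegral_Iic_zero (slabIntegrand_neg σ b)

lemma postCDFS_self (σ w b c t : ℝ) :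
    postCDFS σ w b c c t =
      ((1 - w) * phiS σ c * (if (0 : ℝ) ≤ t then 1 else 0) + w * slabMass σ b (t - c)) /
        ((1 - w) * phiS σ c + w * (2 * slabMass σ b 0)) := by
  simp_rw [postCDFS, mS, gS_self, phiS_sub_mul_deSlab, setIntegral_Iic_comp_sub_right, slabMass]

lemma monotone_postCDFS_self (hσ : 0 < σ) (hb : 0 < b) {w : ℝ} (hw : 0 ≤ w) (hw1 : w ≤ 1)
    (c : ℝ) : Monotone (postCDFS σ w b c c) := by
  intro s t hst
  have hatom : 0 ≤ (1 - w) * phiS σ c := mul_nonneg (by linarith) (phiS_pos hσ c).le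
  have hindicator : (if (0 : ℝ) ≤ s then (1 : ℝ) else 0) ≤ if (0 : ℝ) ≤ t then 1 else 0 := by
    split_ifs <;> grind
  have hmass : slabMass σ b (s - c) ≤ slabMass σ b (t - c) :=
    (slabMass_strictMono hσ hb).monotone (by linarith)
  rw [postCDFS_self, postCDFS_self]
  exact div_le_div_of_nonneg_right
    (add_le_add (mul_le_mul_of_nonneg_left hindicator hatom) (mul_le_mul_of_nonneg_left hmass hw))
    (by nlinarith [slabMass_pos hσ hb 0])

lemma tendsto_postCDFS_self_add (hσ : 0 < σ) (hb : 0 < b) {w : ℝ} (hw : w ≠ 0) (u : ℝ) :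
    Tendsto (fun c => postCDFS σ w b c c (c + u)) atTop
      (𝓝 (slabMass σ b u / (2 * slabMass σ b 0))) := by
  have hatom : Tendsto (fun c => (1 - w) * phiS σ c) atTop (𝓝 0) := by
    simpa using (tendsto_phiS_atTop hσ).const_mul (1 - w)
  have hden : w * (2 * slabMass σ b 0) ≠ 0 := mul_ne_zero hw (by linarith [slabMass_pos hσ hb 0])
  have h := (hatom.add_const (w * slabMass σ b u)).div (hatom.add_const (w * (2 * slabMass σ b 0)))
    (by rwa [zero_add])
  rw [zero_add, zero_add, mul_div_mul_left _ _ hw] at h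
  refine h.congr' ?_
  filter_upwards [eventually_ge_atTop (-u)] with c hc
  rw [Pi.div_apply, postCDFS_self, if_pos (by linarith), mul_one, add_sub_cancel_left]

end Slab

lemma eventually_deltaS_self_mem_Icc {σ w b : ℝ} (hσ : 0 < σ) (hb : 0 < b) (hw : 0 < w)
    (hw1 : w ≤ 1) {ε : ℝ} (hε : 0 < ε) :
    ∀ᶠ c in atTop, deltaS σ w b c c ∈ Icc (c - ε) (c + ε) := by
  have hhalf : slabMass σ b 0 / (2 * slabMass σ b 0) = 1 / 2 := by
    field_simp [(slabMass_pos hσ hb 0).ne']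
  have hmono := slabMass_strictMono hσ hb
  have hpos := slabMass_pos hσ hb 0
  have hbelow : ∀ᶠ c in atTop, postCDFS σ w b c c (c + -ε) < 1 / 2 :=
    (tendsto_postCDFS_self_add hσ hb hw.ne' (-ε)).eventually_lt_const <| by
      rw [← hhalf]; exact div_lt_div_of_pos_right (hmono (by linarith)) (by linarith)
  have habove : ∀ᶠ c in atTop, 1 / 2 < postCDFS σ w b c c (c + ε) :=
    (tendsto_postCDFS_self_add hσ hb hw.ne' ε).eventually_const_lt <| by
      rw [← hhalf]; exact div_lt_div_of_pos_right (hmono hε) (by linarith)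
  filter_upwards [hbelow, habove] with c hlo hhi
  exact csInf_setOf_le_mem_Icc (monotone_postCDFS_self hσ hb hw.le hw1 c) hlo hhi.le

/-- With double-exponential slab and noise variance `σ²`, there is asymptotically
no shrinkage at the data-driven location: `δ(c;w,b,c) − c → 0` as `c → +∞`. -/
theorem stmt17 (σ w b : ℝ) (hσ : 0 < σ) (hb : 0 < b) (hw : 0 < w) (hw1 : w ≤ 1) :
    Filter.Tendsto (fun c : ℝ => deltaS σ w b c c - c) Filter.atTop (nhds 0) := by
  rw [Metric.tendsto_nhds]
  intro ε hε
  filter_upwards [eventually_deltaS_self_mem_Icc hσ hb hw hw1 (half_pos hε)] with c hc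
  rw [Real.dist_eq, sub_zero, abs_lt]
  constructor <;> linarith [hc.1, hc.2]
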